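/- Let B₀ ∈ SL(2,ℝ), z₀ ∈ ℍ, and let ρ ∈ (0, 1/2) with rational approximant r/s (gcd(r,s)=1, r/s not a multiple of 1/2) satisfying |ρ − r/s| ≤ 1/s². Suppose b₀ ≥ s². Then (1/b₀) ∑_{k=0}^{b₀−1} φ(B₀ · R_{kρ} · z₀) ≥ (1 − η(s, b₀)) φ(z₀) φ(B₀·i), where η(s,b₀) → 0 as s → ∞ with b₀/s² → ∞, and the error is controlled via: breaking the sum into blocks of length s, replacing R_{kρ} by R_{kr/s} within each block at hyperbolic-distance cost o(1), and applying the exact block identity (1/s)∑_k φ(B₀·R_{kr/s}·z) = φ(z)φ(B₀·i). -/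

import Mathlib

/-!
For `B ∈ SL(2,ℝ)` and `w ∈ ℍ` one has `φ(B·w) = φ(B·i) φ(w) + Re(σ(B) κ(w)) / 2`, with
`|σ(B)| ≤ 2 φ(B·i)` and `|κ(w)| ≤ φ(w)`. The rotation `R_θ` preserves `φ` and multiplies `κ` by
`e^{4πiθ}`, so along the orbit `R_{kρ}·z` the error terms sum to a geometric series in `e^{4πiρ}`,
of size at most `1 / sin(2πρ)`. Since `s ∤ 2r` and `|ρ - r/s| ≤ 1/s²`, the number `2ρ` stays at
distance about `1/s` from the integers, so `sin(2πρ) ≥ 1/(2s)` and the average over `k < b` is at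
least `(1 - 2s/b) φ(z) φ(B·i)`.
-/

noncomputable def phi (z : ℂ) : ℝ := (1 + ‖z‖ ^ 2) / (2 * z.im)

noncomputable def moeb (A : Matrix (Fin 2) (Fin 2) ℝ) (z : ℂ) : ℂ :=
  ((A 0 0 : ℂ) * z + (A 0 1 : ℂ)) / ((A 1 0 : ℂ) * z + (A 1 1 : ℂ))

noncomputable def Rot (θ : ℝ) : Matrix (Fin 2) (Fin 2) ℝ :=
  !![Real.cos (2 * Real.pi * θ), -Real.sin (2 * Real.pi * θ);
     Real.sin (2 * Real.pi * θ),  Real.cos (2 * Real.pi * θ)]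

open Complex ComplexConjugate
open scoped Real

lemma phi_eq_normSq_div (z : ℂ) : phi z = (1 + normSq z) / (2 * z.im) := by
  rw [phi, Complex.sq_norm]

lemma phi_pos {z : ℂ} (hz : 0 < z.im) : 0 < phi z := by
  rw [phi]; positivity

lemma moeb_im (A : Matrix (Fin 2) (Fin 2) ℝ) (z : ℂ) :
    (moeb A z).im = A.det * z.im / normSq ((A 1 0 : ℂ) * z + A 1 1) := by
  rw [moeb, div_im, Matrix.det_fin_two, ← sub_div]
  congr 1
  simp only [add_re, add_im, mul_re, mul_im, ofReal_re, ofReal_im]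
  ring

lemma moeb_den_ne_zero {A : Matrix (Fin 2) (Fin 2) ℝ} (hA : A.det = 1) {z : ℂ} (hz : 0 < z.im) :
    (A 1 0 : ℂ) * z + A 1 1 ≠ 0 := by
  intro h
  have h10 : A 1 0 = 0 := by
    simpa [hz.ne'] using congrArg im h
  have h11 : A 1 1 = 0 := by
    simpa [h10] using congrArg re h
  simp [Matrix.det_fin_two, h10, h11] at hA

lemma moeb_im_pos {A : Matrix (Fin 2) (Fin 2) ℝ} (hA : A.det = 1) {z : ℂ} (hz : 0 < z.im) :
    0 < (moeb A z).im := by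
  rw [moeb_im, hA, one_mul]
  exact div_pos hz (normSq_pos.2 (moeb_den_ne_zero hA hz))

lemma phi_moeb {A : Matrix (Fin 2) (Fin 2) ℝ} (hA : A.det = 1) {z : ℂ} (hz : 0 < z.im) :
    phi (moeb A z) =
      (normSq ((A 0 0 : ℂ) * z + A 0 1) + normSq ((A 1 0 : ℂ) * z + A 1 1)) / (2 * z.im) := by
  have hden := (normSq_pos.2 (moeb_den_ne_zero hA hz)).ne'
  rw [phi_eq_normSq_div, moeb_im, hA, one_mul, moeb, normSq_div]
  generalize normSq ((A 1 0 : ℂ) * z + A 1 1) = D at hden ⊢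
  field_simp
  ring

/-- `σ(B)`: the image under `B` of the isotropic vector `(1, -i)`, an eigenvector of every
rotation, squared for the bilinear form `x₁² + x₂²`. -/
noncomputable def isotropicSq (B : Matrix (Fin 2) (Fin 2) ℝ) : ℂ :=
  ((B 0 0 : ℂ) - B 0 1 * I) ^ 2 + ((B 1 0 : ℂ) - B 1 1 * I) ^ 2

/-- `κ(w)`; its numerator is `|w|² - 1 + 2i Re w`. -/
noncomputable def secondHarmonic (w : ℂ) : ℂ :=
  (w + I) * (conj w + I) / (2 * w.im : ℝ)

lemma phi_moeb_I {B : Matrix (Fin 2) (Fin 2) ℝ} (hB : B.det = 1) :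
    phi (moeb B I) = (B 0 0 ^ 2 + B 0 1 ^ 2 + B 1 0 ^ 2 + B 1 1 ^ 2) / 2 := by
  rw [phi_moeb hB (by simp)]
  simp only [normSq_apply, add_re, add_im, mul_re, mul_im, ofReal_re, ofReal_im, I_re, I_im]
  ring

lemma phi_moeb_eq_add {B : Matrix (Fin 2) (Fin 2) ℝ} (hB : B.det = 1) {w : ℂ} (hw : 0 < w.im) :
    phi (moeb B w) = phi (moeb B I) * phi w + (isotropicSq B * secondHarmonic w).re / 2 := by
  rw [phi_moeb hB hw, phi_moeb_I hB, phi_eq_normSq_div, secondHarmonic,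
    ← mul_div_assoc (isotropicSq B), div_ofReal_re, isotropicSq]
  field_simp
  simp only [normSq_apply, add_re, add_im, sub_re, sub_im, mul_re, mul_im, ofReal_re, ofReal_im,
    I_re, I_im, pow_two, conj_re, conj_im]
  ring

lemma norm_isotropicSq_le (B : Matrix (Fin 2) (Fin 2) ℝ) :
    ‖isotropicSq B‖ ≤ B 0 0 ^ 2 + B 0 1 ^ 2 + B 1 0 ^ 2 + B 1 1 ^ 2 := by
  have h (p q : ℝ) : ‖((p : ℂ) - q * I) ^ 2‖ = p ^ 2 + q ^ 2 := by
    rw [norm_pow, ← normSq_eq_norm_sq, normSq_apply]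
    simp only [sub_re, sub_im, mul_re, mul_im, ofReal_re, ofReal_im, I_re, I_im]
    ring
  calc ‖isotropicSq B‖
      ≤ ‖((B 0 0 : ℂ) - B 0 1 * I) ^ 2‖ + ‖((B 1 0 : ℂ) - B 1 1 * I) ^ 2‖ := norm_add_le _ _
    _ = _ := by rw [h, h]; ring

lemma norm_secondHarmonic_le {w : ℂ} (hw : 0 < w.im) : ‖secondHarmonic w‖ ≤ phi w := by
  have hparallel : ‖w + I‖ ^ 2 + ‖conj w + I‖ ^ 2 = 2 * (1 + ‖w‖ ^ 2) := by
    simp only [← normSq_eq_norm_sq, normSq_apply, add_re, add_im, conj_re, conj_im, I_re, I_im]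
    ring
  rw [secondHarmonic, norm_div, norm_mul, norm_real, Real.norm_of_nonneg (by positivity), phi]
  gcongr
  nlinarith [sq_nonneg (‖w + I‖ - ‖conj w + I‖)]

lemma Rot_det (θ : ℝ) : (Rot θ).det = 1 := by
  simp [Rot, Matrix.det_fin_two, ← sq]

lemma phi_moeb_Rot {z : ℂ} (hz : 0 < z.im) (θ : ℝ) : phi (moeb (Rot θ) z) = phi z := by
  have hpyth := Real.sin_sq_add_cos_sq (2 * π * θ)
  rw [phi_moeb (Rot_det θ) hz, phi_eq_normSq_div]
  simp only [Rot, Matrix.of_apply, Matrix.cons_val', Matrix.cons_val_zero, Matrix.cons_val_one,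
    Matrix.empty_val', Matrix.cons_val_fin_one, normSq_apply, add_re, add_im, mul_re, mul_im,
    ofReal_re, ofReal_im, ofReal_neg, neg_re, neg_im]
  congr 1
  linear_combination (z.re ^ 2 + z.im ^ 2 + 1) * hpyth

lemma secondHarmonic_moeb_Rot {z : ℂ} (hz : 0 < z.im) (θ : ℝ) :
    secondHarmonic (moeb (Rot θ) z) = exp (↑(4 * π * θ) * I) * secondHarmonic z := by
  set c : ℂ := ((Real.cos (2 * π * θ) : ℝ) : ℂ)
  set s : ℂ := ((Real.sin (2 * π * θ) : ℝ) : ℂ)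
  have hc : conj c = c := conj_ofReal _
  have hs : conj s = s := conj_ofReal _
  have hRot : ∀ i j, ((Rot θ i j : ℝ) : ℂ) = !![c, -s; s, c] i j := by
    intro i j; fin_cases i <;> fin_cases j <;> simp [Rot, c, s]
  have hD : (Rot θ 1 0 : ℂ) * z + Rot θ 1 1 = s * z + c := by simp only [hRot]; simp
  have hD0 : s * z + c ≠ 0 := hD ▸ moeb_den_ne_zero (Rot_det θ) hz
  have hD0' : s * conj z + c ≠ 0 := by
    have := (map_ne_zero (starRingEnd ℂ)).2 hD0
    rwa [map_add, map_mul, hc, hs] at this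
  have hmoeb : moeb (Rot θ) z = (c * z - s) / (s * z + c) := by
    simp only [moeb, hRot]; simp [sub_eq_add_neg]
  have hplus : moeb (Rot θ) z + I = (c + s * I) * (z + I) / (s * z + c) := by
    rw [hmoeb, div_add' _ _ _ hD0]
    congr 1
    linear_combination (-s) * I_sq
  have hconj : conj (moeb (Rot θ) z) + I = (c + s * I) * (conj z + I) / (s * conj z + c) := by
    rw [hmoeb, map_div₀, map_sub, map_mul, map_add, map_mul, hc, hs, div_add' _ _ _ hD0']
    congr 1
    linear_combination (-s) * I_sq
  have him : (moeb (Rot θ) z).im = z.im / normSq (s * z + c) := by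
    rw [moeb_im, Rot_det, one_mul, hD]
  have hexp : exp (↑(4 * π * θ) * I) = (c + s * I) ^ 2 := by
    calc exp (↑(4 * π * θ) * I) = exp (↑(2 * π * θ) * I) ^ 2 := by
          rw [sq, ← exp_add]; push_cast; ring_nf
      _ = (c + s * I) ^ 2 := by rw [exp_mul_I, ← ofReal_cos, ← ofReal_sin]
  have hnormSq : (normSq (s * z + c) : ℂ) = (s * z + c) * (s * conj z + c) := by
    rw [← mul_conj, map_add, map_mul, hc, hs]
  rw [secondHarmonic, secondHarmonic, hplus, hconj, him, hexp]
  push_cast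
  rw [hnormSq]
  field_simp

lemma sum_phi_moeb_Rot {B : Matrix (Fin 2) (Fin 2) ℝ} (hB : B.det = 1) {z : ℂ} (hz : 0 < z.im)
    (ρ : ℝ) (n : ℕ) :
    ∑ k ∈ Finset.range n, phi (moeb B (moeb (Rot (k * ρ)) z)) =
      n * (phi z * phi (moeb B I)) + (isotropicSq B * secondHarmonic z *
        ∑ k ∈ Finset.range n, exp (↑(4 * π * ρ) * I) ^ k).re / 2 := by
  have hterm (k : ℕ) : phi (moeb B (moeb (Rot (k * ρ)) z)) = phi z * phi (moeb B I) +
      (isotropicSq B * secondHarmonic z * exp (↑(4 * π * ρ) * I) ^ k).re / 2 := by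
    rw [phi_moeb_eq_add hB (moeb_im_pos (Rot_det _) hz), phi_moeb_Rot hz,
      secondHarmonic_moeb_Rot hz, ← exp_nat_mul]
    push_cast
    ring_nf
  simp only [hterm, Finset.sum_add_distrib, Finset.sum_const, Finset.card_range, nsmul_eq_mul,
    ← Finset.sum_div, ← re_sum, Finset.mul_sum]

lemma norm_geom_sum_le {𝕜 : Type*} [NormedField 𝕜] {w : 𝕜} (hw : ‖w‖ = 1) (hw1 : w ≠ 1)
    (n : ℕ) :
    ‖∑ k ∈ Finset.range n, w ^ k‖ ≤ 2 / ‖w - 1‖ := by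
  rw [geom_sum_eq hw1, norm_div]
  gcongr
  calc ‖w ^ n - 1‖ ≤ ‖w ^ n‖ + ‖(1 : 𝕜)‖ := norm_sub_le _ _
    _ = 2 := by rw [norm_pow, hw, one_pow, norm_one]; norm_num

lemma norm_sum_exp_le {ρ : ℝ} (hρ : 0 < Real.sin (2 * π * ρ)) (n : ℕ) :
    ‖∑ k ∈ Finset.range n, exp (↑(4 * π * ρ) * I) ^ k‖ ≤ 1 / Real.sin (2 * π * ρ) := by
  have hnorm : ‖exp (↑(4 * π * ρ) * I) - 1‖ = 2 * Real.sin (2 * π * ρ) := by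
    rw [mul_comm, norm_exp_I_mul_ofReal_sub_one, norm_mul,
      show 4 * π * ρ / 2 = 2 * π * ρ by ring, Real.norm_of_nonneg hρ.le]
    norm_num
  have hw : ‖exp (↑(4 * π * ρ) * I)‖ = 1 := norm_exp_ofReal_mul_I _
  have hw1 : exp (↑(4 * π * ρ) * I) ≠ 1 := by
    intro h
    rw [h, sub_self, norm_zero] at hnorm
    linarith
  calc _ ≤ 2 / ‖exp (↑(4 * π * ρ) * I) - 1‖ := norm_geom_sum_le hw hw1 n
    _ = _ := by rw [hnorm]; field_simp

lemma mul_phi_le_average_phi_moeb_Rot {B : Matrix (Fin 2) (Fin 2) ℝ} (hB : B.det = 1) {z : ℂ}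
    (hz : 0 < z.im) {ρ C : ℝ} {n : ℕ} (hn : 0 < n)
    (hC : ‖∑ k ∈ Finset.range n, exp (↑(4 * π * ρ) * I) ^ k‖ ≤ C) :
    (1 - C / n) * (phi z * phi (moeb B I)) ≤
      (1 / n) * ∑ k ∈ Finset.range n, phi (moeb B (moeb (Rot (k * ρ)) z)) := by
  set G := ∑ k ∈ Finset.range n, exp (↑(4 * π * ρ) * I) ^ k
  have hσ : ‖isotropicSq B‖ ≤ 2 * phi (moeb B I) := by
    rw [phi_moeb_I hB]; linarith [norm_isotropicSq_le B]
  have herr : ‖isotropicSq B * secondHarmonic z * G‖ ≤ 2 * phi (moeb B I) * phi z * C := by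
    have hφB : 0 < phi (moeb B I) := phi_pos (moeb_im_pos hB (by rw [I_im]; exact one_pos))
    have hφz := phi_pos hz
    rw [norm_mul, norm_mul]
    exact mul_le_mul (mul_le_mul hσ (norm_secondHarmonic_le hz) (norm_nonneg _) (by positivity))
      hC (norm_nonneg _) (by positivity)
  have hre := neg_le_of_abs_le ((abs_re_le_norm _).trans herr)
  have hn' : (0 : ℝ) < n := Nat.cast_pos.2 hn
  rw [sum_phi_moeb_Rot hB hz, div_mul_eq_mul_div, one_mul, le_div_iff₀ hn']
  field_simp
  nlinarith

lemma one_div_le_abs_div_sub_int {a : ℤ} {s : ℕ} (hs : 0 < s) (ha : ¬ (s : ℤ) ∣ a) (n : ℤ) :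
    1 / (s : ℝ) ≤ |(a : ℝ) / s - n| := by
  have hs' : (0 : ℝ) < s := Nat.cast_pos.2 hs
  have hne : a - n * s ≠ 0 := fun h => ha ⟨n, by linear_combination h⟩
  have hone : (1 : ℝ) ≤ |((a - n * s : ℤ) : ℝ)| := by exact_mod_cast Int.one_le_abs hne
  have heq : (a : ℝ) / s - n = ((a - n * s : ℤ) : ℝ) / s := by push_cast; field_simp
  rw [heq, abs_div, abs_of_pos hs']
  gcongr

lemma two_mul_min_le_sin_pi_mul {x : ℝ} (h0 : 0 ≤ x) (h1 : x ≤ 1) :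
    2 * min x (1 - x) ≤ Real.sin (π * x) := by
  have hπ := Real.pi_pos
  rcases le_total x (1 / 2) with hx | hx
  · have := Real.mul_le_sin (x := π * x) (by positivity) (by nlinarith)
    rw [← mul_assoc, div_mul_cancel₀ _ hπ.ne'] at this
    linarith [min_le_left x (1 - x)]
  · have := Real.mul_le_sin (x := π * (1 - x)) (by nlinarith) (by nlinarith)
    rw [← mul_assoc, div_mul_cancel₀ _ hπ.ne', show π * (1 - x) = π - π * x by ring,
      Real.sin_pi_sub] at this
    linarith [min_le_right x (1 - x)]

lemma one_div_two_mul_le_sin_of_approx {ρ : ℝ} (hρ0 : 0 < ρ) (hρ1 : ρ < 1 / 2) {r : ℤ} {s : ℕ}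
    (hs : 0 < s) (hdvd : ¬ (s : ℤ) ∣ 2 * r) (happ : |ρ - r / s| ≤ 1 / (s : ℝ) ^ 2) :
    1 / (2 * (s : ℝ)) ≤ Real.sin (2 * π * ρ) := by
  have hs3 : (3 : ℝ) ≤ s := by
    have : 3 ≤ s := by
      by_contra! h
      interval_cases s
      · exact hdvd (one_dvd _)
      · exact hdvd (dvd_mul_right 2 r)
    exact_mod_cast this
  have hfar (n : ℤ) : 1 / (s : ℝ) - 2 / (s : ℝ) ^ 2 ≤ |2 * ρ - n| := by
    have h := one_div_le_abs_div_sub_int hs hdvd n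
    have htri := abs_sub_le ((2 * r : ℤ) / (s : ℝ)) (2 * ρ) n
    have hclose : |(2 * r : ℤ) / (s : ℝ) - 2 * ρ| = 2 * |ρ - r / s| := by
      rw [abs_sub_comm, ← abs_two, ← abs_mul, abs_two]; push_cast; ring_nf
    have h2 : 2 / (s : ℝ) ^ 2 = 2 * (1 / (s : ℝ) ^ 2) := by ring
    linarith
  have h0 := hfar 0
  have h1 := hfar 1
  rw [Int.cast_zero, sub_zero, abs_of_pos (by linarith)] at h0
  rw [Int.cast_one, abs_of_neg (by linarith)] at h1
  have hsin := two_mul_min_le_sin_pi_mul (x := 2 * ρ) (by linarith) (by linarith)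
  rw [← mul_assoc, mul_comm π 2] at hsin
  have hs' : (0 : ℝ) < s := by linarith
  have hmin : 1 / (2 * (s : ℝ)) ≤ 2 * (1 / (s : ℝ) - 2 / (s : ℝ) ^ 2) := by
    rw [div_le_iff₀ (by positivity)]
    field_simp
    nlinarith
  calc 1 / (2 * (s : ℝ)) ≤ 2 * min (2 * ρ) (1 - 2 * ρ) :=
        hmin.trans (by gcongr; exact le_min h0 (by linarith))
    _ ≤ _ := hsin

lemma two_mul_div_le_of_sq_le {ε : ℝ} (hε : 0 < ε) {s b : ℕ} (hs : 2 / ε ≤ s)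
    (hb : s ^ 2 ≤ b) :
    2 * (s : ℝ) / b ≤ ε := by
  have hs' : 0 < (s : ℝ) := (div_pos two_pos hε).trans_le hs
  have hb' : (s : ℝ) ^ 2 ≤ b := by exact_mod_cast hb
  have hεs : 2 ≤ ε * s := by rwa [div_le_iff₀' hε] at hs
  rw [div_le_iff₀ ((pow_pos hs' 2).trans_le hb')]
  nlinarith

/-- Elliptic averaging estimate for irrational rotation numbers with good
rational approximants (second cancellation lemma). -/
theorem stmt18 :
    ∃ η : ℕ → ℕ → ℝ,
      (∀ ε > (0 : ℝ), ∃ S M : ℕ, ∀ s b : ℕ, S ≤ s → M * s ^ 2 ≤ b → η s b ≤ ε) ∧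
      ∀ (B₀ : Matrix (Fin 2) (Fin 2) ℝ), B₀.det = 1 →
      ∀ z₀ : ℂ, 0 < z₀.im →
      ∀ ρ : ℝ, 0 < ρ → ρ < 1 / 2 →
      ∀ (r : ℤ) (s : ℕ), 0 < s → Int.gcd r (s : ℤ) = 1 → ¬ ((s : ℤ) ∣ 2 * r) →
        |ρ - (r : ℝ) / (s : ℝ)| ≤ 1 / (s : ℝ) ^ 2 →
      ∀ b₀ : ℕ, s ^ 2 ≤ b₀ →
        (1 - η s b₀) * (phi z₀ * phi (moeb B₀ Complex.I)) ≤
          (1 / (b₀ : ℝ)) * ∑ k ∈ Finset.range b₀,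
            phi (moeb B₀ (moeb (Rot ((k : ℝ) * ρ)) z₀)) := by
  refine ⟨fun s b => 2 * (s : ℝ) / b, fun ε hε => ⟨⌈2 / ε⌉₊, 1, fun s b hS hM => ?_⟩, ?_⟩
  · exact two_mul_div_le_of_sq_le hε ((Nat.le_ceil _).trans (by exact_mod_cast hS))
      (by simpa using hM)
  intro B₀ hB z₀ hz ρ hρ0 hρ1 r s hs _ hdvd happ b₀ hb₀
  have hsin := one_div_two_mul_le_sin_of_approx hρ0 hρ1 hs hdvd happ
  have hsin_pos : 0 < Real.sin (2 * π * ρ) := lt_of_lt_of_le (by positivity) hsin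
  have hG : ‖∑ k ∈ Finset.range b₀, exp (↑(4 * π * ρ) * I) ^ k‖ ≤ 2 * s := by
    refine (norm_sum_exp_le hsin_pos b₀).trans ?_
    rw [div_le_iff₀ hsin_pos]
    rw [div_le_iff₀ (by positivity)] at hsin
    linarith
  exact mul_phi_le_average_phi_moeb_Rot hB hz ((pow_pos hs 2).trans_le hb₀) hG
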